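/- arXiv:1107.1528 — 6 statements merged into one kernel-verified Lean document; each statement's English description precedes it below -/
import Mathlib

section
/- Let G be a finite group, A ⊆ G, a ∈ A, and B = a⁻¹A. If G is a product of N conjugates of B, then G is a product of N conjugates of A. -/
open scoped Pointwise

/-- A conjugate `g⁻¹ A g` of a subset `A`. -/
def conjSet {G : Type*} [Group G] (g : G) (A : Set G) : Set G :=
  (fun a => g⁻¹ * a * g) '' A

private lemma conjSet_translate {G : Type*} [Group G] (A : Set G) (a g : G) :
    conjSet g ((fun x => a⁻¹ * x) '' A) = {g⁻¹ * a⁻¹ * g} * conjSet g A := by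
  rw [conjSet, conjSet, Set.singleton_mul, Set.image_image, Set.image_image]
  apply Set.image_congr
  intro x _
  group

private lemma conjSet_mul_singleton {G : Type*} [Group G] (A : Set G) (g t : G) :
    conjSet g A * {t} = {t} * conjSet (g * t) A := by
  rw [conjSet, conjSet, Set.singleton_mul, Set.mul_singleton, Set.image_image,
    Set.image_image]
  apply Set.image_congr
  intro x _
  group

private lemma key {G : Type*} [Group G] (A : Set G) (a : G) (l : List G) :
    ∃ (l' : List G) (t : G), l'.length = l.length ∧
      (l.map fun g => conjSet g ((fun x => a⁻¹ * x) '' A)).prod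
        = {t} * (l'.map fun g => conjSet g A).prod := by
  induction l with
  | nil =>
      exact ⟨[], 1, rfl, by simp [Set.singleton_one]⟩
  | cons g l ih =>
      obtain ⟨l', t, hlen, hp⟩ := ih
      refine ⟨(g * t) :: l', g⁻¹ * a⁻¹ * g * t, by simp [hlen], ?_⟩
      rw [List.map_cons, List.prod_cons, hp, conjSet_translate]
      rw [List.map_cons, List.prod_cons]
      rw [mul_assoc, ← mul_assoc (conjSet g A), conjSet_mul_singleton]
      rw [← mul_assoc, ← mul_assoc, Set.singleton_mul_singleton, mul_assoc]

/-- If `a ∈ A` and `G` is a product of `N` conjugates of `B = a⁻¹A`, then `G` is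
a product of `N` conjugates of `A`. -/
theorem prod_conjugates_of_translate {G : Type*} [Group G] (A : Set G) (a : G)
    (ha : a ∈ A) (N : ℕ) (g : Fin N → G)
    (h : (List.ofFn fun i => conjSet (g i) ((fun x => a⁻¹ * x) '' A)).prod
        = (Set.univ : Set G)) :
    ∃ g' : Fin N → G,
      (List.ofFn fun i => conjSet (g' i) A).prod = (Set.univ : Set G) := by
  obtain ⟨l', t, hlen, hp⟩ := key A a (List.ofFn g)
  simp only [List.map_ofFn, Function.comp_def] at hp
  rw [h] at hp
  have hlen' : l'.length = N := by simpa using hlen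
  have hP : (l'.map fun g => conjSet g A).prod = (Set.univ : Set G) := by
    have this1 : ({t⁻¹} : Set G) * Set.univ
        = {t⁻¹} * ({t} * (l'.map fun g => conjSet g A).prod) := by rw [← hp]
    rw [← mul_assoc, Set.singleton_mul_singleton, inv_mul_cancel,
      Set.singleton_one, one_mul] at this1
    have huniv : ({t⁻¹} : Set G) * Set.univ = Set.univ := by
      rw [Set.singleton_mul, Set.image_univ]
      exact Set.range_eq_univ.mpr (mul_left_surjective _)
    rw [huniv] at this1
    exact this1.symm
  refine ⟨fun i => l'.get (Fin.cast hlen'.symm i), ?_⟩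
  have : (List.ofFn fun i => conjSet (l'.get (Fin.cast hlen'.symm i)) A)
      = l'.map fun g => conjSet g A := by
    apply List.ext_getElem
    · simp [hlen']
    · intro n h1 h2
      simp
  rw [this, hP]
end

section
/- For every nonidentity element x of the alternating group A_n with n ≥ 5, there exists a 3-cycle y ∈ A_n such that the commutator [x,y] = x⁻¹y⁻¹xy is nontrivial and moves at most 5 points (its support has size at most 5). -/
/-!
Pick a point `a` moved by `x` and a point `c ∉ {a, x a, x⁻¹ a}`, and let
`y` be the 3-cycle `a ↦ c ↦ x a ↦ a`. The commutator `x⁻¹y⁻¹xy = (x⁻¹y⁻¹x) y` is supported in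
`supp y ∪ x⁻¹(supp y)`, and these two 3-sets share the point `a = x⁻¹(x a)`, so at most 5 points
move. It is nontrivial because `y (x a) = a` while `x (y a) = x c ≠ a`.
-/

namespace Equiv.Perm

variable {α : Type*}

theorem inv_mul_inv_mul_mul_ne_one_of_apply_ne {x y : Perm α} {a : α}
    (h : y (x a) ≠ x (y a)) : x⁻¹ * y⁻¹ * x * y ≠ 1 := by
  intro hxy
  have hcomm : Commute x y := by
    rw [← Commute.inv_inv_iff, ← commutatorElement_eq_one_iff_commute, commutatorElement_def,
      inv_inv, inv_inv, hxy]
  exact h (DFunLike.congr_fun hcomm.eq a).symm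

variable [DecidableEq α] [Fintype α]

theorem support_inv_mul_inv_mul_mul_subset (x y : Perm α) :
    (x⁻¹ * y⁻¹ * x * y).support ⊆ y.support.map x⁻¹.toEmbedding ∪ y.support := by
  have h := support_mul_le (x⁻¹ * y⁻¹ * x⁻¹⁻¹) y
  rw [support_conj, support_inv, inv_inv] at h
  exact h

theorem card_support_inv_mul_inv_mul_mul_lt {x y : Perm α} {a : α}
    (ha : a ∈ y.support) (hxa : x a ∈ y.support) :
    (x⁻¹ * y⁻¹ * x * y).support.card < 2 * y.support.card := by
  have hmem : a ∈ y.support.map x⁻¹.toEmbedding ∩ y.support :=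
    Finset.mem_inter.2 ⟨Finset.mem_map.2 ⟨x a, hxa, by simp⟩, ha⟩
  have hunion := Finset.card_union_add_card_inter (y.support.map x⁻¹.toEmbedding) y.support
  have hmap := Finset.card_map (s := y.support) x⁻¹.toEmbedding
  have hinter := Finset.card_pos.2 ⟨a, hmem⟩
  have hsub := Finset.card_le_card (support_inv_mul_inv_mul_mul_subset x y)
  omega

end Equiv.Perm

open Equiv Equiv.Perm in
theorem exists_three_cycle_commutator_small_support_general (n : ℕ) (hn : 5 ≤ n)
    (x : Equiv.Perm (Fin n)) (hx1 : x ≠ 1) :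
    ∃ y : Equiv.Perm (Fin n), y ∈ alternatingGroup (Fin n) ∧ y.IsThreeCycle ∧
      x⁻¹ * y⁻¹ * x * y ≠ 1 ∧ (x⁻¹ * y⁻¹ * x * y).support.card ≤ 5 := by
  obtain ⟨a, ha⟩ : ∃ a, x a ≠ a := by
    by_contra! h
    exact hx1 (Equiv.ext h)
  obtain ⟨c, -, hc⟩ := Finset.exists_mem_notMem_of_card_lt_card
    (s := {a, x a, x⁻¹ a}) (t := Finset.univ)
    (by rw [Finset.card_univ, Fintype.card_fin]; exact Finset.card_le_three.trans_lt (by omega))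
  simp only [Finset.mem_insert, Finset.mem_singleton, not_or] at hc
  obtain ⟨hca, hcb, hcxa⟩ := hc
  set y := swap a (x a) * swap a c
  have hy : y.IsThreeCycle :=
    isThreeCycle_swap_mul_swap_same (Ne.symm ha) (Ne.symm hca) (Ne.symm hcb)
  have hya : y a = c := by simp [y, swap_apply_of_ne_of_ne hca hcb]
  have hyxa : y (x a) = a := by simp [y, swap_apply_of_ne_of_ne ha (Ne.symm hcb)]
  refine ⟨y, hy.mem_alternatingGroup, hy, ?_, ?_⟩
  · refine inv_mul_inv_mul_mul_ne_one_of_apply_ne (a := a) ?_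
    rw [hyxa, hya]
    exact fun h => hcxa (by simp [h])
  · have := card_support_inv_mul_inv_mul_mul_lt (x := x)
      (mem_support.2 (by rw [hya]; exact hca))
      (mem_support.2 (by rw [hyxa]; exact Ne.symm ha))
    rw [hy.card_support] at this
    omega

/-- For every nonidentity `x ∈ A_n` (`n ≥ 5`) there is a 3-cycle `y ∈ A_n` such
that `[x,y] = x⁻¹y⁻¹xy` is nontrivial and has support of size at most 5. -/
theorem exists_three_cycle_commutator_small_support (n : ℕ) (hn : 5 ≤ n)
    (x : Equiv.Perm (Fin n)) (hx : x ∈ alternatingGroup (Fin n)) (hx1 : x ≠ 1) :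
    ∃ y : Equiv.Perm (Fin n), y ∈ alternatingGroup (Fin n) ∧ y.IsThreeCycle ∧
      x⁻¹ * y⁻¹ * x * y ≠ 1 ∧ (x⁻¹ * y⁻¹ * x * y).support.card ≤ 5 :=
  exists_three_cycle_commutator_small_support_general n hn x hx1
end

section
/- For n ≥ 5, the alternating group A_n (viewed as permutations of {1,…,n}) is a product of 3 conjugates of the point stabilizer of n (a subgroup isomorphic to A_{n-1}). That is, there exist g₁, g₂, g₃ ∈ A_n with A_n = H^{g₁} · H^{g₂} · H^{g₃}, where H = {σ ∈ A_n : σ(n) = n}. -/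
open scoped Pointwise

/-!
Write `G_a` for the stabilizer of a point `a`; then `G_a^g = G_{g⁻¹ a}`, so it suffices to write
`A_n = G_p G_q G_p` for some point `q ≠ p`. A permutation `σ` lies in `G_p G_q G_p` as soon
as some `b c` with `b ∈ G_q`, `c ∈ G_p` sends `σ⁻¹ p` to `p`. Such a pair exists for every starting
point because `A_n` (`n ≥ 4`) is 2-transitive: a point `x ≠ q` is sent to `p` inside `G_q`, and
`q` itself is first moved inside `G_p` to a third point.
-/

namespace MulAction

variable {G α : Type*} [Group G] [MulAction G α]

theorem conjSet_stabilizer (g : G) (a : α) :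
    conjSet g (stabilizer G a) = stabilizer G (g⁻¹ • a) := by
  ext σ
  constructor
  · rintro ⟨τ, hτ, rfl⟩
    simp only [SetLike.mem_coe, mem_stabilizer_iff, mul_smul, smul_inv_smul] at hτ ⊢
    rw [hτ]
  · intro hσ
    refine ⟨g * σ * g⁻¹, ?_, by group⟩
    simp only [SetLike.mem_coe, mem_stabilizer_iff, mul_smul] at hσ ⊢
    rw [hσ, smul_inv_smul]

theorem stabilizer_mul_stabilizer_mul_stabilizer_eq_univ {p q : α}
    (h : ∀ x : α, ∃ b ∈ stabilizer G q, ∃ c ∈ stabilizer G p, b • c • x = p) :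
    (stabilizer G p : Set G) * (stabilizer G q : Set G) * (stabilizer G p : Set G) = Set.univ := by
  refine Set.eq_univ_of_forall fun σ => ?_
  obtain ⟨b, hb, c, hc, hbc⟩ := h (σ⁻¹ • p)
  have hfix : σ * c⁻¹ * b⁻¹ ∈ stabilizer G p := by
    have hx : c⁻¹ • b⁻¹ • p = σ⁻¹ • p := by rw [inv_smul_eq_iff, inv_smul_eq_iff, hbc]
    rw [mem_stabilizer_iff, mul_smul, mul_smul, hx, smul_inv_smul]
  have hσ : σ = σ * c⁻¹ * b⁻¹ * b * c := by group
  rw [hσ]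
  exact Set.mul_mem_mul (Set.mul_mem_mul hfix hb) hc

variable [IsMultiplyPretransitive G α 2]

theorem exists_mem_stabilizer_smul_eq_of_ne {a b c : α} (hac : a ≠ c) (hbc : b ≠ c) :
    ∃ g ∈ stabilizer G c, g • a = b := by
  obtain ⟨g, hga, hgc⟩ := is_two_pretransitive_iff.mp ‹_› hac hbc
  exact ⟨g, hgc, hga⟩

theorem exists_mem_stabilizer_smul_smul_eq {p q y : α} (hpq : p ≠ q) (hyp : y ≠ p)
    (hyq : y ≠ q) (x : α) :
    ∃ b ∈ stabilizer G q, ∃ c ∈ stabilizer G p, b • c • x = p := by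
  rcases eq_or_ne x q with rfl | hxq
  · obtain ⟨c, hc, hcx⟩ := exists_mem_stabilizer_smul_eq_of_ne (G := G) hpq.symm hyp
    obtain ⟨b, hb, hby⟩ := exists_mem_stabilizer_smul_eq_of_ne (G := G) hyq hpq
    exact ⟨b, hb, c, hc, by rw [hcx, hby]⟩
  · obtain ⟨b, hb, hbx⟩ := exists_mem_stabilizer_smul_eq_of_ne (G := G) hxq hpq
    exact ⟨b, hb, 1, one_mem _, by rw [one_smul, hbx]⟩

end MulAction

open MulAction

theorem alternatingGroup.isMultiplyPretransitive_two {α : Type*} [Fintype α] [DecidableEq α]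
    (h : 4 ≤ Nat.card α) : IsMultiplyPretransitive (alternatingGroup α) α 2 :=
  have := alternatingGroup.isMultiplyPretransitive α
  isMultiplyPretransitive_of_le (n := Nat.card α - 2) (by omega) (Nat.sub_le _ _)

theorem alternating_eq_prod_three_conjugates_stabilizer_general (n : ℕ) (hn : 5 ≤ n)
    (p : Fin n) :
    ∃ g₁ g₂ g₃ : alternatingGroup (Fin n),
      conjSet g₁ {σ : alternatingGroup (Fin n) | (σ : Equiv.Perm (Fin n)) p = p} *
        conjSet g₂ {σ : alternatingGroup (Fin n) | (σ : Equiv.Perm (Fin n)) p = p} *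
        conjSet g₃ {σ : alternatingGroup (Fin n) | (σ : Equiv.Perm (Fin n)) p = p} =
      (Set.univ : Set (alternatingGroup (Fin n))) := by
  have := alternatingGroup.isMultiplyPretransitive_two (α := Fin n) (by rw [Nat.card_fin]; omega)
  have : Nontrivial (Fin n) := Fin.nontrivial_iff_two_le.mpr (by omega)
  obtain ⟨q, hqp⟩ := exists_ne p
  obtain ⟨y, -, hy⟩ := Finset.exists_mem_notMem_of_card_lt_card (s := {p, q}) (t := .univ)
    (Finset.card_le_two.trans_lt (by rw [Finset.card_univ, Fintype.card_fin]; omega))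
  simp only [Finset.mem_insert, Finset.mem_singleton, not_or] at hy
  obtain ⟨g, -, hg⟩ := exists_mem_stabilizer_smul_eq_of_ne
    (G := alternatingGroup (Fin n)) (Ne.symm hy.2) (Ne.symm hy.1)
  have hgp : g⁻¹ • p = q := by rw [← hg, inv_smul_smul]
  have hstab : {σ : alternatingGroup (Fin n) | (σ : Equiv.Perm (Fin n)) p = p} =
      stabilizer (alternatingGroup (Fin n)) p := rfl
  refine ⟨1, g, 1, ?_⟩
  rw [hstab, conjSet_stabilizer, conjSet_stabilizer, inv_one, one_smul, hgp]
  exact stabilizer_mul_stabilizer_mul_stabilizer_eq_univ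
    (exists_mem_stabilizer_smul_smul_eq (G := alternatingGroup (Fin n)) hqp.symm hy.1 hy.2)

/-- For `n ≥ 5`, the alternating group `A_n` is a product of 3 conjugates of
the stabilizer of the last point (a copy of `A_{n-1}`). -/
theorem alternating_eq_prod_three_conjugates_stabilizer (n : ℕ) (hn : 5 ≤ n)
    (p : Fin n) (hp : (p : ℕ) = n - 1) :
    ∃ g₁ g₂ g₃ : alternatingGroup (Fin n),
      conjSet g₁ {σ : alternatingGroup (Fin n) | (σ : Equiv.Perm (Fin n)) p = p} *
        conjSet g₂ {σ : alternatingGroup (Fin n) | (σ : Equiv.Perm (Fin n)) p = p} *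
        conjSet g₃ {σ : alternatingGroup (Fin n) | (σ : Equiv.Perm (Fin n)) p = p} =
      (Set.univ : Set (alternatingGroup (Fin n))) :=
  alternating_eq_prod_three_conjugates_stabilizer_general n hn p
end

section
/- For n ≥ 7, the alternating group A_n is a product of 9 conjugates of the pointwise stabilizer of {n-1, n} (a subgroup isomorphic to A_{n-2}). -/
open scoped Pointwise

/-!
Write `G_s` for the pointwise stabilizer of a set `s` of points. If `G_{s ∪ {c}}` acts
transitively on the points outside `s ∪ {c}`, then `G_s = G_{s ∪ {c}} G_{s ∪ {d}} G_{s ∪ {c}}`: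
for `σ ∈ G_s` pick `x ∉ s ∪ {c}` with `σ x ∉ s ∪ {c}`, and `g, h ∈ G_{s ∪ {c}}` with `g x = d`
and `h d = σ x`; then `h⁻¹ σ g⁻¹` fixes `d`, so it lies in `G_{s ∪ {d}}`.

The alternating group `A_n` is `(n - 2)`-transitive, so this applies with `s = ∅` and with `s` a
single point: `A_n = G_a G_b G_a`, `G_a = G_{c,a} G_{d,a} G_{c,a}` and
`G_b = G_{c,b} G_{d,b} G_{c,b}`. Each of the nine factors is a conjugate of `G_{p,q}` because
`A_n` is `2`-transitive.
-/

open MulAction SubMulAction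

section FixingSubgroup

variable {G α : Type*} [Group G] [MulAction G α]

theorem conjSet_fixingSubgroup (g : G) (s : Set α) :
    conjSet g (fixingSubgroup G s : Set G) = fixingSubgroup G (g⁻¹ • s) := by
  ext k
  simp [conjSet, fixingSubgroup_smul_eq_fixingSubgroup_map_conj]

theorem fixingSubgroup_subset_mul_mul {s : Set α} {c d : α} (hd : d ∉ insert c s)
    [IsPretransitive (fixingSubgroup G (insert c s)) (ofFixingSubgroup G (insert c s))]
    (hs : (insert c s)ᶜ.Nontrivial) :
    (fixingSubgroup G s : Set G) ⊆
      fixingSubgroup G (insert c s) * fixingSubgroup G (insert d s) *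
        fixingSubgroup G (insert c s) := by
  intro σ hσ
  obtain ⟨x, hx, hxc⟩ := hs.exists_ne (σ⁻¹ • c)
  have hσx : σ • x ∉ insert c s := by
    rintro (hc | hxs)
    · exact hxc (eq_inv_smul_iff.mpr hc)
    · exact hx (.inr (smul_left_cancel σ (hσ ⟨_, hxs⟩) ▸ hxs))
  obtain ⟨⟨g, hg⟩, hgx⟩ := exists_smul_eq (fixingSubgroup G (insert c s))
    (⟨x, hx⟩ : ofFixingSubgroup G (insert c s)) ⟨d, hd⟩
  obtain ⟨⟨h, hh⟩, hhd⟩ := exists_smul_eq (fixingSubgroup G (insert c s))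
    (⟨d, hd⟩ : ofFixingSubgroup G (insert c s)) ⟨σ • x, hσx⟩
  replace hgx : g • x = d := congrArg Subtype.val hgx
  replace hhd : h • d = σ • x := congrArg Subtype.val hhd
  have hle : fixingSubgroup G (insert c s) ≤ fixingSubgroup G s :=
    fixingSubgroup_antitone G α (Set.subset_insert c s)
  have hmid : h⁻¹ * σ * g⁻¹ ∈ fixingSubgroup G (insert d s) :=
    mem_fixingSubgroup_insert_iff.mpr
      ⟨by simp [mul_smul, inv_smul_eq_iff.mpr hgx.symm, ← hhd],
        mul_mem (mul_mem (inv_mem (hle hh)) hσ) (inv_mem (hle hg))⟩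
  rw [show σ = h * (h⁻¹ * σ * g⁻¹) * g by group]
  exact Set.mul_mem_mul (Set.mul_mem_mul hh hmid) hg

end FixingSubgroup

namespace alternatingGroup

variable {α : Type*} [Fintype α] [DecidableEq α]

theorem fixingSubgroup_subset_mul_mul {s : Set α} {c d : α} (hd : d ∉ insert c s)
    (hcard : s.ncard + 4 ≤ Nat.card α) :
    (fixingSubgroup (alternatingGroup α) s : Set (alternatingGroup α)) ⊆
      fixingSubgroup (alternatingGroup α) (insert c s) *
        fixingSubgroup (alternatingGroup α) (insert d s) *
        fixingSubgroup (alternatingGroup α) (insert c s) := by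
  have hins : (insert c s).ncard ≤ s.ncard + 1 := Set.ncard_insert_le c s
  have := isMultiplyPretransitive α
  have : IsMultiplyPretransitive (fixingSubgroup (alternatingGroup α) (insert c s))
      (ofFixingSubgroup (alternatingGroup α) (insert c s)) 1 :=
    ofFixingSubgroup.isMultiplyPretransitive' (n := Nat.card α - 2) _ (by omega) (by simp)
  rw [is_one_pretransitive_iff] at this
  refine _root_.fixingSubgroup_subset_mul_mul hd ?_
  rw [← Set.one_lt_ncard_iff_nontrivial, Set.ncard_compl]
  omega

theorem exists_conjSet_fixingSubgroup_pair (hcard : 4 ≤ Nat.card α) {p q x y : α}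
    (hpq : p ≠ q) (hxy : x ≠ y) :
    ∃ g : alternatingGroup α,
      conjSet g (fixingSubgroup (alternatingGroup α) {p, q} : Set (alternatingGroup α)) =
        fixingSubgroup (alternatingGroup α) {x, y} := by
  have := isMultiplyPretransitive α
  have := isMultiplyPretransitive_of_le (G := alternatingGroup α) (α := α) (m := 2)
    (n := Nat.card α - 2) (by omega) (by omega)
  obtain ⟨g, hgx, hgy⟩ := is_two_pretransitive_iff.mp this hxy hpq
  refine ⟨g, ?_⟩
  rw [conjSet_fixingSubgroup, Set.smul_set_insert, Set.smul_set_singleton,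
    inv_smul_eq_iff.mpr hgx.symm, inv_smul_eq_iff.mpr hgy.symm]

end alternatingGroup

/-- For `n ≥ 7`, `A_n` is a product of 9 conjugates of the pointwise
stabilizer of the last two points (a copy of `A_{n-2}`). -/
theorem alternating_eq_prod_nine_conjugates_two_point_stabilizer (n : ℕ)
    (hn : 7 ≤ n) (p q : Fin n) (hp : (p : ℕ) = n - 1) (hq : (q : ℕ) = n - 2) :
    ∃ g : Fin 9 → alternatingGroup (Fin n),
      (List.ofFn fun i => conjSet (g i)
        {σ : alternatingGroup (Fin n) |
          (σ : Equiv.Perm (Fin n)) p = p ∧ (σ : Equiv.Perm (Fin n)) q = q}).prod =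
      (Set.univ : Set (alternatingGroup (Fin n))) := by
  have hpq : p ≠ q := Fin.ne_of_val_ne (by omega)
  have hH : {σ : alternatingGroup (Fin n) |
      (σ : Equiv.Perm (Fin n)) p = p ∧ (σ : Equiv.Perm (Fin n)) q = q} =
      fixingSubgroup (alternatingGroup (Fin n)) {p, q} := by
    ext σ
    simp [mem_fixingSubgroup_iff, Subgroup.smul_def, Equiv.Perm.smul_def]
  let a : Fin n := ⟨0, by omega⟩
  let b : Fin n := ⟨1, by omega⟩
  let c : Fin n := ⟨2, by omega⟩
  let d : Fin n := ⟨3, by omega⟩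
  have hconj {x y : Fin n} (hxy : x ≠ y) :=
    alternatingGroup.exists_conjSet_fixingSubgroup_pair (by simp; omega) hpq hxy
  obtain ⟨g₁, hg₁⟩ := hconj (x := c) (y := a) (by simp [c, a])
  obtain ⟨g₂, hg₂⟩ := hconj (x := d) (y := a) (by simp [d, a])
  obtain ⟨g₃, hg₃⟩ := hconj (x := c) (y := b) (by simp [c, b])
  obtain ⟨g₄, hg₄⟩ := hconj (x := d) (y := b) (by simp [d, b])
  refine ⟨![g₁, g₂, g₁, g₃, g₄, g₃, g₁, g₂, g₁], Set.eq_univ_of_univ_subset ?_⟩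
  have hTop := alternatingGroup.fixingSubgroup_subset_mul_mul (s := ∅) (c := a) (d := b)
    (by simp [a, b]) (by simp; omega)
  have hTa := alternatingGroup.fixingSubgroup_subset_mul_mul (s := {a}) (c := c) (d := d)
    (by simp [a, c, d]) (by simp; omega)
  have hTb := alternatingGroup.fixingSubgroup_subset_mul_mul (s := {b}) (c := c) (d := d)
    (by simp [b, c, d]) (by simp; omega)
  simp only [fixingSubgroup_empty, Subgroup.coe_top, insert_empty_eq] at hTop
  simpa [hH, List.ofFn_succ, hg₁, hg₂, hg₃, hg₄, mul_assoc] using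
    hTop.trans (Set.mul_subset_mul (Set.mul_subset_mul hTa hTb) hTa)
end

section
/- Let n ≥ 5 and let x ∈ A_n be a nonidentity element, with conjugacy class C = x^{A_n}. Then the product set (C⁻¹·C)·(C⁻¹·C) contains a double transposition (a permutation that is a product of two disjoint transpositions). -/
/-!
The set `D = C⁻¹C` contains `1`, is stable under conjugation, and contains every commutator
`⁅g, x⁻¹⁆ = (g x g⁻¹)⁻¹ x`. Taking for `g` a product of two transpositions adapted to a point
`a` moved by `y = x⁻¹` (through `a`, `y a`, `y² a` and one fresh point) makes `⁅g, y⁆` a 3-cycle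
or a double transposition. A double transposition `t` lies in `D²` as `t * 1`. If `D` contains
a 3-cycle it contains all of them, since 3-cycles are conjugate in `A_n` for `n ≥ 5`, and
`(p r q)(r s p) = (p q)(r s)`.
-/

open scoped Pointwise commutatorElement

open Equiv Equiv.Perm

section ConjugacyClass

variable {G : Type*} [Group G] {x : G}

theorem one_mem_inv_mul_conjugatesOf : (1 : G) ∈ (conjugatesOf x)⁻¹ * conjugatesOf x :=
  ⟨x⁻¹, Set.inv_mem_inv.2 mem_conjugatesOf_self, x, mem_conjugatesOf_self, inv_mul_cancel x⟩

theorem conj_mem_inv_mul_conjugatesOf {d : G} (hd : d ∈ (conjugatesOf x)⁻¹ * conjugatesOf x)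
    (k : G) : k * d * k⁻¹ ∈ (conjugatesOf x)⁻¹ * conjugatesOf x := by
  obtain ⟨c, hc, c', hc', rfl⟩ := hd
  have hconj : ∀ z ∈ conjugatesOf x, k * z * k⁻¹ ∈ conjugatesOf x := fun z hz =>
    IsConj.trans hz (isConj_iff.2 ⟨k, rfl⟩)
  refine ⟨k * c * k⁻¹, ?_, k * c' * k⁻¹, hconj c' hc', by group⟩
  simpa [mul_assoc] using hconj c⁻¹ hc

theorem commutatorElement_inv_mem_inv_mul_conjugatesOf (g : G) :
    ⁅g, x⁻¹⁆ ∈ (conjugatesOf x)⁻¹ * conjugatesOf x :=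
  ⟨(g * x * g⁻¹)⁻¹, Set.inv_mem_inv.2 (isConj_iff.2 ⟨g, rfl⟩), x, mem_conjugatesOf_self, by
    simp [commutatorElement_def, mul_assoc]⟩

end ConjugacyClass

theorem Finset.exists_notMem_of_card_lt_natCard {α : Type*} [Fintype α] {s : Finset α}
    (h : s.card < Nat.card α) : ∃ z, z ∉ s := by
  rw [Nat.card_eq_fintype_card, ← Finset.card_univ] at h
  obtain ⟨z, -, hz⟩ := Finset.exists_mem_notMem_of_card_lt_card h
  exact ⟨z, hz⟩

namespace Equiv.Perm

variable {α : Type*} [DecidableEq α]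

theorem swap_mul_swap_mem_alternatingGroup [Fintype α] {p q r s : α} (hpq : p ≠ q)
    (hrs : r ≠ s) : swap p q * swap r s ∈ alternatingGroup α :=
  mul_mem_alternatingGroup_of_isSwap ⟨p, q, hpq, rfl⟩ ⟨r, s, hrs, rfl⟩

theorem isThreeCycle_or_cycleType_eq_two_two_swap_mul_swap [Fintype α] {p q r s : α}
    (hpq : p ≠ q) (hrs : r ≠ s) (hrp : r ≠ p) (hrq : r ≠ q) :
    IsThreeCycle (swap p q * swap r s) ∨ (swap p q * swap r s).cycleType = {2, 2} := by
  by_cases hsp : s = p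
  · subst hsp
    left
    simpa [swap_comm r] using isThreeCycle_swap_mul_swap_same hpq hrp.symm hrq.symm
  by_cases hsq : s = q
  · subst hsq
    left
    rw [swap_comm p, swap_comm r]
    exact isThreeCycle_swap_mul_swap_same hpq.symm hrq.symm hrp.symm
  · exact Or.inr (cycleType_swap_mul_swap_of_nodup (by simp_all [eq_comm]))

theorem commutatorElement_swap_mul_swap (y : Perm α) (p q r s : α) :
    ⁅swap p q * swap r s, y⁆ = swap p q * swap r s * swap (y r) (y s) * swap (y p) (y q) := by
  rw [commutatorElement_def, swap_apply_apply, swap_apply_apply, mul_inv_rev, swap_inv, swap_inv]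
  group

theorem commutatorElement_swap_mul_swap_of_apply_eq {y : Perm α} {p q r s : α} (hp : y p = r)
    (hq : y q = s) :
    ⁅swap p q * swap r s, y⁆ = swap p q * swap (swap r s (y r)) (swap r s (y s)) := by
  rw [commutatorElement_swap_mul_swap, hp, hq, swap_apply_apply (swap r s), swap_inv]
  group

theorem exists_commutatorElement_isThreeCycle_or_cycleType_eq_two_two [Fintype α]
    (h4 : 4 ≤ Nat.card α) {y : Perm α} (hy : y ≠ 1) :
    ∃ g ∈ alternatingGroup α, IsThreeCycle ⁅g, y⁆ ∨ ⁅g, y⁆.cycleType = {2, 2} := by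
  obtain ⟨a, ha⟩ : ∃ a, y a ≠ a := by
    by_contra! h
    exact hy (Equiv.ext h)
  by_cases hya : y (y a) = a
  · obtain ⟨c, hc⟩ := Finset.exists_notMem_of_card_lt_natCard (s := {a, y a})
      ((Finset.card_le_two).trans_lt (by omega))
    simp only [Finset.mem_insert, Finset.mem_singleton, not_or] at hc
    refine ⟨swap c a * swap a (y a), swap_mul_swap_mem_alternatingGroup hc.1 ha.symm, ?_⟩
    have hyc : y a ≠ y c := y.injective.ne (Ne.symm hc.1)
    rw [commutatorElement_swap_mul_swap, hya, swap_comm (y a) a, mul_swap_mul_self,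
      swap_comm c a, swap_comm (y c) (y a)]
    exact isThreeCycle_or_cycleType_eq_two_two_swap_mul_swap (Ne.symm hc.1) hyc ha (Ne.symm hc.2)
  · obtain ⟨e, he⟩ := Finset.exists_notMem_of_card_lt_natCard (s := {a, y a, y (y a)})
      ((Finset.card_le_three).trans_lt (by omega))
    simp only [Finset.mem_insert, Finset.mem_singleton, not_or] at he
    have hbf : y a ≠ y e := y.injective.ne (Ne.symm he.1)
    -- `y` maps the pair `(a, e)` of the first transposition onto the second one, so the
    -- commutator collapses to `(a e)` times a single transposition moving `y² a`.
    refine ⟨swap a e * swap (y a) (y e), swap_mul_swap_mem_alternatingGroup (Ne.symm he.1) hbf, ?_⟩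
    have hc : swap (y a) (y e) (y (y a)) = y (y a) :=
      swap_apply_of_ne_of_ne (y.injective.ne ha) (y.injective.ne (Ne.symm he.2.1))
    rw [commutatorElement_swap_mul_swap_of_apply_eq rfl rfl]
    refine isThreeCycle_or_cycleType_eq_two_two_swap_mul_swap (Ne.symm he.1)
      ((swap _ _).injective.ne (y.injective.ne hbf)) ?_ ?_ <;> rw [hc]
    exacts [hya, Ne.symm he.2.2]

theorem exists_cycleType_eq_two_two_mem_mul_self [Fintype α] (h5 : 5 ≤ Nat.card α)
    {S : Set (alternatingGroup α)} (hS : ∀ k, ∀ s ∈ S, k * s * k⁻¹ ∈ S) (h1 : 1 ∈ S)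
    {t : alternatingGroup α} (ht : t ∈ S)
    (htype : IsThreeCycle (t : Perm α) ∨ (t : Perm α).cycleType = {2, 2}) :
    ∃ σ ∈ S * S, (σ : Perm α).cycleType = {2, 2} := by
  rcases htype with h3 | h22
  · have mem : ∀ τ : alternatingGroup α, IsThreeCycle (τ : Perm α) → τ ∈ S := by
      intro τ hτ
      obtain ⟨k, rfl⟩ := isConj_iff.1 (alternatingGroup.isThreeCycle_isConj h5 h3 hτ)
      exact hS k t ht
    obtain ⟨f⟩ : Nonempty (Fin 4 ↪ α) :=
      Function.Embedding.nonempty_of_card_le <| by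
        rw [Fintype.card_fin, ← Nat.card_eq_fintype_card]; omega
    have hf : ∀ i j : Fin 4, i ≠ j → f i ≠ f j := fun i j => f.injective.ne
    have τ₁ : IsThreeCycle (swap (f 0) (f 1) * swap (f 0) (f 2)) :=
      isThreeCycle_swap_mul_swap_same (hf 0 1 (by decide)) (hf 0 2 (by decide))
        (hf 1 2 (by decide))
    have τ₂ : IsThreeCycle (swap (f 2) (f 0) * swap (f 2) (f 3)) :=
      isThreeCycle_swap_mul_swap_same (hf 2 0 (by decide)) (hf 2 3 (by decide))
        (hf 0 3 (by decide))
    refine ⟨⟨_, τ₁.mem_alternatingGroup⟩ * ⟨_, τ₂.mem_alternatingGroup⟩,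
      Set.mul_mem_mul (mem _ τ₁) (mem _ τ₂), ?_⟩
    change (swap (f 0) (f 1) * swap (f 0) (f 2) *
      (swap (f 2) (f 0) * swap (f 2) (f 3))).cycleType = _
    rw [swap_comm (f 2) (f 0), ← mul_assoc, mul_swap_mul_self]
    exact cycleType_swap_mul_swap_of_nodup (by simp [hf, Fin.ext_iff])
  · exact ⟨t * 1, Set.mul_mem_mul ht h1, by simpa using h22⟩

end Equiv.Perm

/-- For `n ≥ 5` and `1 ≠ x ∈ A_n` with conjugacy class `C`, the set
`(C⁻¹C)(C⁻¹C)` contains a double transposition. -/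
theorem double_transposition_mem_class_prod (n : ℕ) (hn : 5 ≤ n)
    (x : alternatingGroup (Fin n)) (hx : x ≠ 1) :
    ∃ σ ∈ ({z : alternatingGroup (Fin n) | IsConj x z}⁻¹ *
            {z : alternatingGroup (Fin n) | IsConj x z}) *
          ({z : alternatingGroup (Fin n) | IsConj x z}⁻¹ *
            {z : alternatingGroup (Fin n) | IsConj x z}),
      (σ : Equiv.Perm (Fin n)).cycleType = {2, 2} := by
  have hcard : 5 ≤ Nat.card (Fin n) := by simpa using hn
  obtain ⟨g, hg, htype⟩ :=
    exists_commutatorElement_isThreeCycle_or_cycleType_eq_two_two (y := (x : Perm (Fin n))⁻¹)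
      (by omega) (by simpa using hx)
  refine exists_cycleType_eq_two_two_mem_mul_self hcard
    (fun k _ hs => conj_mem_inv_mul_conjugatesOf hs k) one_mem_inv_mul_conjugatesOf
    (commutatorElement_inv_mem_inv_mul_conjugatesOf ⟨g, hg⟩) ?_
  simpa [commutatorElement_def] using htype
end

section
/- Let q ≥ 2 be a prime power and u a nontrivial element of the group U = {(1, t) : t ∈ F_q} of upper unitriangular matrices in SL₂(F_q) (i.e., u = [[1,s],[0,1]] with s ≠ 0). Then every element of U is a product of at most ⌈log₂ q⌉ + 1 conjugates (in SL₂(F_q)) of elements of {1, u}, using diagonal conjugation: conjugating u by diag(a, a⁻¹) gives [[1, a²s],[0,1]]. -/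
open Matrix

open scoped MatrixGroups

/-
Writing `u = [[1, s], [0, 1]]` and `v = [[1, t], [0, 1]]`, conjugation by `diag(c⁻¹, c)` turns `u`
into `[[1, c²s], [0, 1]]`. In a finite field every element is a sum of two squares, so
`t / s = a² + b²` and `v = [[1, a²s], [0, 1]] * [[1, b²s], [0, 1]]` is a product of two conjugates
of `u` (or of `1`, when `a` or `b` vanishes). Two factors are well within the bound.
-/

open Polynomial in
theorem FiniteField.exists_sq_add_sq {F : Type*} [Field F] [Fintype F] (x : F) :
    ∃ a b : F, a ^ 2 + b ^ 2 = x := by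
  by_cases hF : ringChar F = 2
  · obtain ⟨a, ha⟩ := FiniteField.isSquare_of_char_two hF x
    exact ⟨a, 0, by rw [ha]; ring⟩
  · classical
    obtain ⟨a, b, hab⟩ : ∃ a b : F, (X ^ 2 : F[X]).eval a + (X ^ 2 - C x).eval b = 0 :=
      FiniteField.exists_root_sum_quadratic (degree_X_pow 2)
        (degree_X_pow_sub_C (by norm_num) _) (FiniteField.odd_card_of_char_ne_two hF)
    refine ⟨a, b, ?_⟩
    simp only [eval_sub, eval_pow, eval_X, eval_C] at hab
    linear_combination hab

namespace Matrix.SpecialLinearGroup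

section CommRing

variable {R : Type*} [CommRing R]

def unipotent (x : R) : SL(2, R) :=
  ⟨!![1, x; 0, 1], by simp [det_fin_two_of]⟩

@[simp]
lemma coe_unipotent (x : R) : (unipotent x : Matrix (Fin 2) (Fin 2) R) = !![1, x; 0, 1] := rfl

@[simp]
lemma unipotent_zero : unipotent (0 : R) = 1 := by
  ext i j
  fin_cases i <;> fin_cases j <;> simp

lemma unipotent_add (x y : R) : unipotent (x + y) = unipotent x * unipotent y := by
  ext i j
  fin_cases i <;> fin_cases j <;> simp [mul_apply, Fin.sum_univ_two, add_comm]

lemma eq_unipotent_of_entries (w : SL(2, R)) (h10 : (w : Matrix (Fin 2) (Fin 2) R) 1 0 = 0)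
    (h00 : (w : Matrix (Fin 2) (Fin 2) R) 0 0 = 1) (h11 : (w : Matrix (Fin 2) (Fin 2) R) 1 1 = 1) :
    w = unipotent ((w : Matrix (Fin 2) (Fin 2) R) 0 1) := by
  ext i j
  fin_cases i <;> fin_cases j <;> simp [h10, h00, h11]

def diagUnit (c : Rˣ) : SL(2, R) :=
  ⟨!![(c⁻¹ : Rˣ), 0; 0, c], by simp [det_fin_two_of]⟩

@[simp]
lemma coe_diagUnit (c : Rˣ) :
    (diagUnit c : Matrix (Fin 2) (Fin 2) R) = !![((c⁻¹ : Rˣ) : R), 0; 0, (c : R)] := rfl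

lemma diagUnit_inv_mul_unipotent_mul (c : Rˣ) (x : R) :
    (diagUnit c)⁻¹ * unipotent x * diagUnit c = unipotent ((c : R) ^ 2 * x) := by
  rw [mul_assoc, inv_mul_eq_iff_eq_mul]
  apply Subtype.ext
  simp [sq, mul_assoc, mul_comm x]

end CommRing

lemma exists_conj_eq_unipotent_sq_mul {F : Type*} [Field F] (s c : F) :
    ∃ g z : SL(2, F), (z = 1 ∨ z = unipotent s) ∧ g⁻¹ * z * g = unipotent (c ^ 2 * s) := by
  rcases eq_or_ne c 0 with rfl | hc
  · exact ⟨1, 1, Or.inl rfl, by simp⟩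
  · exact ⟨diagUnit (Units.mk0 c hc), unipotent s, Or.inr rfl,
      diagUnit_inv_mul_unipotent_mul _ _⟩

end Matrix.SpecialLinearGroup

open Matrix.SpecialLinearGroup in
/-- Every element of the upper unitriangular subgroup `U` of `SL₂(F_q)` is a
product of at most `2⌈log₂ q⌉ + 2` conjugates of elements of `{1, u}`, where
`u` is any nontrivial element of `U`. -/
theorem unitriangular_prod_conjugates {F : Type*} [Field F] [Fintype F]
    (u : SpecialLinearGroup (Fin 2) F)
    (hu : (u : Matrix (Fin 2) (Fin 2) F) 1 0 = 0 ∧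
          (u : Matrix (Fin 2) (Fin 2) F) 0 0 = 1 ∧
          (u : Matrix (Fin 2) (Fin 2) F) 1 1 = 1 ∧
          (u : Matrix (Fin 2) (Fin 2) F) 0 1 ≠ 0)
    (v : SpecialLinearGroup (Fin 2) F)
    (hv : (v : Matrix (Fin 2) (Fin 2) F) 1 0 = 0 ∧
          (v : Matrix (Fin 2) (Fin 2) F) 0 0 = 1 ∧
          (v : Matrix (Fin 2) (Fin 2) F) 1 1 = 1) :
    ∃ (N : ℕ), N ≤ 2 * Nat.clog 2 (Fintype.card F) + 2 ∧
      ∃ (g : Fin N → SpecialLinearGroup (Fin 2) F)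
        (z : Fin N → SpecialLinearGroup (Fin 2) F),
        (∀ i, z i = 1 ∨ z i = u) ∧
        v = (List.ofFn fun i => (g i)⁻¹ * z i * g i).prod := by
  obtain ⟨hu10, hu00, hu11, hs⟩ := hu
  obtain ⟨hv10, hv00, hv11⟩ := hv
  rw [eq_unipotent_of_entries u hu10 hu00 hu11, eq_unipotent_of_entries v hv10 hv00 hv11]
  set s := (u : Matrix (Fin 2) (Fin 2) F) 0 1
  set t := (v : Matrix (Fin 2) (Fin 2) F) 0 1
  obtain ⟨a, b, hab⟩ := FiniteField.exists_sq_add_sq (t / s)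
  obtain ⟨g₀, z₀, hz₀, hconj₀⟩ := exists_conj_eq_unipotent_sq_mul s a
  obtain ⟨g₁, z₁, hz₁, hconj₁⟩ := exists_conj_eq_unipotent_sq_mul s b
  refine ⟨2, by omega, ![g₀, g₁], ![z₀, z₁], fun i => by fin_cases i <;> assumption, ?_⟩
  have hsplit : t = a ^ 2 * s + b ^ 2 * s := by
    rw [← add_mul, hab, div_mul_cancel₀ t hs]
  rw [hsplit, unipotent_add, ← hconj₀, ← hconj₁]
  simp [List.ofFn_succ, mul_assoc]
end
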